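/- arXiv:1608.05855 — 2 statements merged into one kernel-verified Lean document; each statement's English description precedes it below -/
import Mathlib

section
/- The folding dynamics G is regular on the phase space X = 𝔠_N × ⟦−N,N⟧^ℕ: for every point X = (C,F) ∈ X and every ε > 0, there exists a point X̃ ∈ X with d(X, X̃) < ε and an integer n ≥ 1 such that G^n(X̃) = X̃. In other words, the set of periodic points of G is dense in (X, d). -/
open scoped BigOperators

namespace HP

/-- A conformation of `N+1` residues in absolute encoding
(the initial residue, always `0`, is omitted): `C k` is the paper's `C_{k+1}`. -/
abbrev Conf (N : ℕ) := Fin N → ZMod 4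

open Classical in
/-- `δ(a,b) = 0` if `a = b`, `1` otherwise. -/
noncomputable def delta {α : Type*} (a b : α) : ℝ := if a = b then 0 else 1

/-- `d_C(C,Č) = Σ_{k=1}^N δ(C_k,Č_k)·2^{N−k}`. -/
noncomputable def dC (N : ℕ) (C C' : Conf N) : ℝ :=
  ∑ k : Fin N, delta (C k) (C' k) * (2 : ℝ) ^ (N - 1 - (k : ℕ))

/-- `d_F(F,F̌) = (9/(2N))·Σ_{k=0}^∞ |F^k − F̌^k|/10^{k+1}`. -/
noncomputable def dF (N : ℕ) (F F' : ℕ → ℤ) : ℝ :=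
  (9 / (2 * (N : ℝ))) * ∑' k : ℕ, |((F k : ℝ)) - ((F' k : ℝ))| / 10 ^ (k + 1)

/-- `d((C,F),(Č,F̌)) = d_C(C,Č) + d_F(F,F̌)`. -/
noncomputable def distX (N : ℕ) (X Y : Conf N × (ℕ → ℤ)) : ℝ :=
  dC N X.1 Y.1 + dF N X.2 Y.2

/-- A folding sequence takes values in `⟦−N,N⟧`. -/
def validSeq (N : ℕ) (F : ℕ → ℤ) : Prop := ∀ k, |F k| ≤ (N : ℤ)

/-- The fold map `f_k`: residues with (paper) index `≥ |k|` are rotated by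
`f^{sign k}` where `f x = x + 1` (in `ℤ/4ℤ`); `f_0 = id`. -/
def foldMap (N : ℕ) (k : ℤ) (C : Conf N) : Conf N :=
  fun j => if ((j : ℕ) : ℤ) + 1 < |k| then C j else C j + (Int.sign k : ZMod 4)

/-- The folding dynamics `G(C,F) = (f_{i(F)}(C), σ(F))`. -/
def G (N : ℕ) : Conf N × (ℕ → ℤ) → Conf N × (ℕ → ℤ) :=
  fun X => (foldMap N (X.2 0) X.1, fun n => X.2 (n + 1))

/-- The shift `σ` on folding sequences. -/
def shiftF (F : ℕ → ℤ) : ℕ → ℤ := fun k => F (k + 1)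

/-- Unit move in the 2D lattice associated with an absolute encoding letter. -/
def step (c : ZMod 4) : ℤ × ℤ :=
  if c = 0 then (1, 0) else if c = 1 then (0, -1) else if c = 2 then (-1, 0) else (0, 1)

/-- `pos N C i` is the lattice point `X_i` of the 2D representation `p(C)`. -/
def pos (N : ℕ) (C : Conf N) : ℕ → ℤ × ℤ
  | 0 => (0, 0)
  | i + 1 => pos N C i + (if h : i < N then step (C ⟨i, h⟩) else 0)

/-- The SAW requirement: the lattice points `X_0, …, X_N` are pairwise distinct. -/
def SAW (N : ℕ) (C : Conf N) : Prop :=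
  ∀ i j : ℕ, i ≤ N → j ≤ N → pos N C i = pos N C j → i = j

/-- Successive application of fold maps `f_{k_1}, …, f_{k_n}`. -/
def folds (N : ℕ) : Conf N → List ℤ → Conf N
  | C, [] => C
  | C, k :: t => folds N (foldMap N k C) t

/-- The set `𝔠_N` of acceptable conformations: obtained from `(0,…,0)` by a
nonempty sequence of folds in `⟦−N,N⟧`, all intermediate conformations
(including the initial and final ones) satisfying the SAW requirement. -/
def acceptable (N : ℕ) (C : Conf N) : Prop :=
  ∃ L : List ℤ, L ≠ [] ∧ (∀ k ∈ L, |k| ≤ (N : ℤ)) ∧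
    folds N (fun _ => 0) L = C ∧
    ∀ p : List ℤ, p <+: L → SAW N (folds N (fun _ => 0) p)

/-- Membership in the phase space `X = 𝔠_N × ⟦−N,N⟧^ℕ`. -/
def inX (N : ℕ) (X : Conf N × (ℕ → ℤ)) : Prop :=
  acceptable N X.1 ∧ validSeq N X.2

/-- `U` is open in the metric space `(X, d)` (relative topology on `𝔠_N × ⟦−N,N⟧^ℕ`). -/
def openIn (N : ℕ) (U : Set (Conf N × (ℕ → ℤ))) : Prop :=
  ∀ x ∈ U, ∃ ε > (0 : ℝ), ∀ y, inX N y → distX N x y < ε → y ∈ U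

/-- `A` is closed in the metric space `(X, d)` (relative topology). -/
def closedIn (N : ℕ) (A : Set (Conf N × (ℕ → ℤ))) : Prop :=
  ∀ x, inX N x → x ∉ A → ∃ ε > (0 : ℝ), ∀ y, inX N y → distX N x y < ε → y ∉ A

/-!
Since `f_{-k} ∘ f_k = id`, following `F` for `m` steps and then undoing these folds in reverse
order brings every conformation back to itself. Repeating this word of length `2m` gives a folding
sequence `F̃` that agrees with `F` on its first `m` terms, so `(C, F̃)` is a periodic point of `G`
in the same conformation `C` at distance at most `10⁻ᵐ` from `(C, F)`.
-/

lemma foldMap_neg_foldMap (N : ℕ) (k : ℤ) (C : Conf N) :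
    foldMap N (-k) (foldMap N k C) = C := by
  funext j
  simp only [foldMap, abs_neg]
  split
  · rfl
  · simp [Int.sign_neg]

lemma folds_append (N : ℕ) (C : Conf N) (L M : List ℤ) :
    folds N C (L ++ M) = folds N (folds N C L) M := by
  induction L generalizing C with
  | nil => rfl
  | cons k t ih => simp [folds, ih]

lemma folds_reverse_map_neg (N : ℕ) (C : Conf N) (L : List ℤ) :
    folds N (folds N C L) (L.map Neg.neg).reverse = C := by
  induction L generalizing C with
  | nil => rfl
  | cons k t ih =>
    simp only [List.map_cons, List.reverse_cons, folds_append, folds, ih, foldMap_neg_foldMap]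

lemma iterate_G (N n : ℕ) (C : Conf N) (F : ℕ → ℤ) :
    (G N)^[n] (C, F) = (folds N C ((List.range n).map F), fun k => F (k + n)) := by
  induction n generalizing C F with
  | zero => rfl
  | succ n ih =>
    rw [Function.iterate_succ_apply, G, ih, List.range_succ_eq_map, List.map_cons,
      List.map_map]
    simp only [folds, Function.comp_def, Nat.add_assoc]

/-- `P` repeated forever; the junk value `0` when `P = []`. -/
def periodicSeq (P : List ℤ) (k : ℕ) : ℤ := P.getD (k % P.length) 0

section periodicSeq

variable (P : List ℤ)

lemma periodicSeq_add_length (k : ℕ) : periodicSeq P (k + P.length) = periodicSeq P k := by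
  simp [periodicSeq]

lemma periodicSeq_of_lt {k : ℕ} (hk : k < P.length) : periodicSeq P k = P[k] := by
  rw [periodicSeq, Nat.mod_eq_of_lt hk, List.getD_eq_getElem]

lemma map_range_length_periodicSeq : (List.range P.length).map (periodicSeq P) = P :=
  List.ext_getElem (by simp) fun k hk _ => by
    simp only [List.getElem_map, List.getElem_range]
    exact periodicSeq_of_lt P (by simpa using hk)

lemma validSeq_periodicSeq {N : ℕ} (hP : ∀ k ∈ P, |k| ≤ (N : ℤ)) :
    validSeq N (periodicSeq P) := by
  intro k
  rcases eq_or_ne P [] with rfl | hne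
  · simp [periodicSeq]
  · have hk : k % P.length < P.length := Nat.mod_lt _ (List.length_pos_iff.2 hne)
    rw [periodicSeq, List.getD_eq_getElem _ _ hk]
    exact hP _ (List.getElem_mem hk)

lemma iterate_G_length_periodicSeq {N : ℕ} {C : Conf N} (hP : folds N C P = C) :
    (G N)^[P.length] (C, periodicSeq P) = (C, periodicSeq P) := by
  rw [iterate_G, map_range_length_periodicSeq, hP]
  exact Prod.ext rfl (funext (periodicSeq_add_length P))

end periodicSeq

lemma dC_self (N : ℕ) (C : Conf N) : dC N C C = 0 := by
  simp [dC, delta]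

lemma abs_sub_le_of_validSeq {N : ℕ} {F F' : ℕ → ℤ} (hF : validSeq N F)
    (hF' : validSeq N F') (k : ℕ) : |(F k : ℝ) - F' k| ≤ 2 * N := by
  have h : |F k - F' k| ≤ 2 * (N : ℤ) := by
    linarith [abs_sub (F k) (F' k), hF k, hF' k]
  exact_mod_cast h

lemma tsum_div_ten_pow_add (c : ℝ) (m : ℕ) :
    ∑' k : ℕ, c / 10 ^ (k + m + 1) = c / (9 * 10 ^ m) := by
  have h : ∀ k : ℕ, c / 10 ^ (k + m + 1) = c / 10 ^ (m + 1) * (1 / 10) ^ k := fun k => by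
    rw [one_div_pow, pow_add, pow_add]
    field_simp
    ring
  rw [tsum_congr h, tsum_mul_left, tsum_geometric_of_lt_one (by norm_num) (by norm_num), pow_succ]
  field_simp
  ring

lemma summable_div_ten_pow_succ (c : ℝ) : Summable fun k : ℕ => c / 10 ^ (k + 1) := by
  refine ((summable_geometric_of_lt_one (by norm_num : (0 : ℝ) ≤ 1 / 10) (by norm_num)).mul_left
    (c / 10)).congr fun k => ?_
  rw [one_div_pow, pow_succ]
  field_simp

lemma dF_le_of_eq_of_lt {N m : ℕ} {F F' : ℕ → ℤ} (hF : validSeq N F) (hF' : validSeq N F')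
    (heq : ∀ k < m, F k = F' k) : dF N F F' ≤ (1 / 10) ^ m := by
  set t : ℕ → ℝ := fun k => |(F k : ℝ) - F' k| / 10 ^ (k + 1)
  have ht_le : ∀ k, t k ≤ 2 * N / 10 ^ (k + 1) := fun k =>
    div_le_div_of_nonneg_right (abs_sub_le_of_validSeq hF hF' k) (by positivity)
  have ht : Summable t :=
    .of_nonneg_of_le (fun k => by positivity) ht_le (summable_div_ten_pow_succ _)
  have ht_head : ∑ k ∈ Finset.range m, t k = 0 :=
    Finset.sum_eq_zero fun k hk => by simp [t, heq k (Finset.mem_range.1 hk)]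
  have ht_tsum : ∑' k, t k ≤ 2 * N / (9 * 10 ^ m) := by
    rw [← ht.sum_add_tsum_nat_add m, ht_head, zero_add, ← tsum_div_ten_pow_add]
    exact Summable.tsum_le_tsum (fun k => ht_le (k + m)) ((summable_nat_add_iff m).2 ht)
      ((summable_nat_add_iff m).2 (summable_div_ten_pow_succ _))
  rcases N.eq_zero_or_pos with rfl | hN
  · simp [dF] -- the junk value `9 / (2 * 0) = 0`
  calc dF N F F' = 9 / (2 * N) * ∑' k, t k := rfl
    _ ≤ 9 / (2 * N) * (2 * N / (9 * 10 ^ m)) := by gcongr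
    _ = (1 / 10) ^ m := by rw [one_div_pow]; field_simp

theorem G_regular_general (N : ℕ) :
    ∀ X : Conf N × (ℕ → ℤ), inX N X → ∀ ε > (0 : ℝ),
      ∃ Y : Conf N × (ℕ → ℤ), inX N Y ∧ distX N X Y < ε ∧
        ∃ n : ℕ, 1 ≤ n ∧ (G N)^[n] Y = Y := by
  rintro ⟨C, F⟩ ⟨hC, hF⟩ ε hε
  obtain ⟨m, hm⟩ := exists_pow_lt_of_lt_one hε (by norm_num : (1 : ℝ) / 10 < 1)
  set L := (List.range (m + 1)).map F
  set P := L ++ (L.map Neg.neg).reverse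
  have hP_bound : ∀ k ∈ P, |k| ≤ (N : ℤ) := by
    simp only [P, L, List.mem_append, List.mem_reverse, List.map_map, List.mem_map]
    rintro _ (⟨i, -, rfl⟩ | ⟨i, -, rfl⟩)
    exacts [hF i, (abs_neg _).le.trans (hF i)]
  have hP_head : ∀ k < m + 1, F k = periodicSeq P k := fun k hk => by
    rw [periodicSeq_of_lt P (by simp [P, L]; omega), List.getElem_append_left (by simp [L]; omega)]
    simp [L]
  have hP_loop : folds N C P = C := by rw [folds_append, folds_reverse_map_neg]
  refine ⟨(C, periodicSeq P), ⟨hC, validSeq_periodicSeq P hP_bound⟩, ?_, P.length,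
    by simp [P, L]; omega, iterate_G_length_periodicSeq P hP_loop⟩
  calc distX N (C, F) (C, periodicSeq P) = dF N F (periodicSeq P) := by
        simp [distX, dC_self]
    _ ≤ (1 / 10) ^ (m + 1) := dF_le_of_eq_of_lt hF (validSeq_periodicSeq P hP_bound) hP_head
    _ ≤ (1 / 10) ^ m := pow_le_pow_of_le_one (by norm_num) (by norm_num) m.le_succ
    _ < ε := hm

/-- `G` is regular on `X = 𝔠_N × ⟦−N,N⟧^ℕ`: the periodic points
of `G` are dense in `(X, d)`. -/
theorem G_regular (N : ℕ) (hN : 1 ≤ N) :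
    ∀ X : Conf N × (ℕ → ℤ), inX N X → ∀ ε > (0 : ℝ),
      ∃ Y : Conf N × (ℕ → ℤ), inX N Y ∧ distX N X Y < ε ∧
        ∃ n : ℕ, 1 ≤ n ∧ (G N)^[n] Y = Y :=
  G_regular_general N

end HP
end

section
/- The folding dynamics G is expansive on (X, d) with constant of expansivity at least 1: for all X, X' ∈ X = 𝔠_N × ⟦−N,N⟧^ℕ with X ≠ X', there exists n ∈ ℕ such that d(G^n(X), G^n(X')) ≥ 1. -/
open scoped BigOperators

namespace HP

lemma delta_nonneg {α : Type*} (a b : α) : 0 ≤ delta a b := by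
  unfold delta; split <;> norm_num

lemma dF_nonneg (N : ℕ) (F F' : ℕ → ℤ) : 0 ≤ dF N F F' := by
  unfold dF
  exact mul_nonneg (by positivity) (tsum_nonneg fun k => by positivity)

lemma one_le_dC (N : ℕ) {C C' : Conf N} (h : C ≠ C') : 1 ≤ dC N C C' := by
  obtain ⟨j, hj⟩ := Function.ne_iff.mp h
  have h1 : delta (C j) (C' j) * (2:ℝ)^(N - 1 - (j:ℕ)) ≤ dC N C C' :=
    Finset.single_le_sum
      (f := fun i : Fin N => delta (C i) (C' i) * (2:ℝ)^(N - 1 - (i:ℕ)))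
      (fun i _ => mul_nonneg (delta_nonneg _ _) (by positivity))
      (Finset.mem_univ j)
  have h2 : delta (C j) (C' j) = 1 := if_neg hj
  have h3 : (1:ℝ) ≤ (2:ℝ)^(N - 1 - (j:ℕ)) := one_le_pow₀ (by norm_num)
  calc (1:ℝ) ≤ (2:ℝ)^(N - 1 - (j:ℕ)) := h3
    _ = delta (C j) (C' j) * (2:ℝ)^(N - 1 - (j:ℕ)) := by rw [h2, one_mul]
    _ ≤ dC N C C' := h1

lemma one_le_distX (N : ℕ) {X Y : Conf N × (ℕ → ℤ)} (h : X.1 ≠ Y.1) :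
    1 ≤ distX N X Y := by
  unfold distX
  have := one_le_dC N h
  have := dF_nonneg N X.2 Y.2
  linarith

lemma sign_trich (x : ℤ) : x.sign = -1 ∨ x.sign = 0 ∨ x.sign = 1 := by
  rcases lt_trichotomy x 0 with h | h | h
  · left; exact Int.sign_eq_neg_one_of_neg h
  · right; left; simp [h]
  · right; right; exact Int.sign_eq_one_of_pos h

lemma sign_cast_ne {a b : ℤ} (h : a.sign ≠ b.sign) :
    (a.sign : ZMod 4) ≠ (b.sign : ZMod 4) := by
  rcases sign_trich a with ha | ha | ha <;> rcases sign_trich b with hb | hb | hb <;>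
    rw [ha, hb] at h ⊢ <;> first | (exact absurd rfl h) | decide

lemma foldMap_ne_aux (N : ℕ) (hN : 1 ≤ N) (C : Conf N) {a b : ℤ}
    (hb : |b| ≤ (N:ℤ)) (hs : a.sign = b.sign) (ha0 : a ≠ 0) (hlt : |a| < |b|) :
    foldMap N a C ≠ foldMap N b C := by
  have h1 : (1:ℤ) ≤ |a| := by
    rcases abs_pos.mpr ha0 with h; omega
  have h2 : (2:ℤ) ≤ |b| := by omega
  have hjN : |b|.toNat - 2 < N := by omega
  intro hcontra
  have := congrFun hcontra ⟨|b|.toNat - 2, hjN⟩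
  simp only [foldMap] at this
  have hcj : (((|b|.toNat - 2 : ℕ) : ℕ) : ℤ) + 1 = |b| - 1 := by omega
  rw [hcj] at this
  rw [if_neg (by omega), if_pos (by omega)] at this
  have hsz : a.sign ≠ 0 := by simpa [Int.sign_eq_zero_iff_zero] using ha0
  have : (a.sign : ZMod 4) = 0 := by
    have := add_left_cancel (a := C ⟨|b|.toNat - 2, hjN⟩)
      (b := (a.sign : ZMod 4)) (c := 0) (by rw [add_zero]; exact this)
    exact this
  rcases sign_trich a with h | h | h <;> rw [h] at this <;>
    first | (exact hsz h) | (revert this; decide)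

lemma foldMap_ne (N : ℕ) (hN : 1 ≤ N) (C : Conf N) {a b : ℤ}
    (ha : |a| ≤ (N:ℤ)) (hb : |b| ≤ (N:ℤ)) (hab : a ≠ b) :
    foldMap N a C ≠ foldMap N b C := by
  by_cases hs : a.sign = b.sign
  · have ha0 : a ≠ 0 := by
      rintro rfl
      have hb0 : b = 0 := by simpa [Int.sign_eq_zero_iff_zero] using hs.symm
      exact hab hb0.symm
    have hb0 : b ≠ 0 := by
      rintro rfl
      exact hab (by simpa [Int.sign_eq_zero_iff_zero] using hs)
    have habs : |a| ≠ |b| := by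
      intro h
      apply hab
      have h1 := Int.sign_mul_abs a
      have h2 := Int.sign_mul_abs b
      rw [← h1, ← h2, hs, h]
    rcases lt_or_gt_of_ne habs with h | h
    · exact foldMap_ne_aux N hN C hb hs ha0 h
    · exact (foldMap_ne_aux N hN C ha hs.symm hb0 h).symm
  · intro hcontra
    have hjN : N - 1 < N := by omega
    have := congrFun hcontra ⟨N - 1, hjN⟩
    simp only [foldMap] at this
    have hcj : (((N - 1 : ℕ) : ℕ) : ℤ) + 1 = (N:ℤ) := by omega
    rw [hcj, if_neg (by omega), if_neg (by omega)] at this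
    exact sign_cast_ne hs (add_left_cancel this)

lemma iter_snd (N n : ℕ) (X : Conf N × (ℕ → ℤ)) :
    ((G N)^[n] X).2 = fun m => X.2 (m + n) := by
  induction n generalizing X with
  | zero => simp
  | succ n ih =>
    rw [Function.iterate_succ_apply, ih]
    funext m
    show (G N X).2 (m + n) = X.2 (m + (n + 1))
    simp only [G]
    congr 1

lemma iter_fst (N n : ℕ) (X X' : Conf N × (ℕ → ℤ)) (h1 : X.1 = X'.1)
    (h2 : ∀ m < n, X.2 m = X'.2 m) :
    ((G N)^[n] X).1 = ((G N)^[n] X').1 := by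
  induction n generalizing X X' with
  | zero => simpa using h1
  | succ n ih =>
    rw [Function.iterate_succ_apply, Function.iterate_succ_apply]
    apply ih
    · simp only [G, h1, h2 0 (by omega)]
    · intro m hm
      exact h2 (m + 1) (by omega)

/-- `G` is expansive on `(X, d)` with constant of expansivity at
least `1`: distinct points of `X` are eventually separated by at least `1`. -/
theorem G_expansive (N : ℕ) (hN : 1 ≤ N) :
    ∀ X X' : Conf N × (ℕ → ℤ), inX N X → inX N X' → X ≠ X' →
      ∃ n : ℕ, distX N ((G N)^[n] X) ((G N)^[n] X') ≥ 1 := by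
  intro X X' hX hX' hne
  by_cases hC : X.1 = X'.1
  · have hF : X.2 ≠ X'.2 := fun h => hne (Prod.ext hC h)
    have hex : ∃ k, X.2 k ≠ X'.2 k := Function.ne_iff.mp hF
    set k := Nat.find hex with hk
    refine ⟨k + 1, ?_⟩
    have hfst : ((G N)^[k] X).1 = ((G N)^[k] X').1 :=
      iter_fst N k X X' hC (fun m hm => not_not.mp (Nat.find_min hex hm))
    rw [Function.iterate_succ_apply', Function.iterate_succ_apply']
    apply one_le_distX
    show foldMap N (((G N)^[k] X).2 0) ((G N)^[k] X).1 ≠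
      foldMap N (((G N)^[k] X').2 0) ((G N)^[k] X').1
    rw [iter_snd, iter_snd, hfst]
    simp only [zero_add]
    exact foldMap_ne N hN _ (hX.2 k) (hX'.2 k) (Nat.find_spec hex)
  · exact ⟨0, by simpa using one_le_distX N hC⟩

end HP
end
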